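/- Let G be the pointed directed graph associated to a finite tree T with distinguished vertex v_1, and let x be an infinite walk through G starting at v_1. Then the sequence of edge labels of x lies in F_T, the set of infinite paths through the self-similar tree T^*; conversely every element of F_T arises as the label sequence of a unique infinite walk in G starting at v_1. -/

import Mathlib

/-- The substring x↾[a,b) of an infinite sequence x. -/
def seg {m : ℕ} (x : ℕ → Fin m) (a b : ℕ) : List (Fin m) :=
  List.ofFn (fun i : Fin (b - a) => x (a + i))

/-- A finite tree: downward closed under the prefix relation. -/
def DownClosed {m : ℕ} (T : Finset (List (Fin m))) : Prop :=
  ∀ σ ∈ T, ∀ p : List (Fin m), p <+: σ → p ∈ T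

/-- σ is a terminal node of T: a maximal element of T under the prefix relation. -/
def IsTerminal {m : ℕ} (T : Finset (List (Fin m))) (σ : List (Fin m)) : Prop :=
  σ ∈ T ∧ ∀ τ ∈ T, σ <+: τ → τ = σ

/-- σ belongs to the self-similar tree T^* generated by T: σ is a concatenation of
terminal nodes of T followed by an element of T. -/
def InTstar {m : ℕ} (T : Finset (List (Fin m))) (σ : List (Fin m)) : Prop :=
  ∃ (l : List (List (Fin m))) (ρ : List (Fin m)),
    (∀ τ ∈ l, IsTerminal T τ) ∧ ρ ∈ T ∧ σ = l.flatten ++ ρ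

/-- One labelled step of the pointed graph G associated to T: from the vertex
(non-terminal node) u, reading symbol s, one moves to the non-terminal child u⌢s if
it is non-terminal, and back to the root [] if u⌢s is a terminal node of T. -/
def Step {m : ℕ} (T : Finset (List (Fin m))) (u : List (Fin m)) (s : Fin m)
    (v : List (Fin m)) : Prop :=
  u ++ [s] ∈ T ∧
    ((IsTerminal T (u ++ [s]) ∧ v = []) ∨ (¬ IsTerminal T (u ++ [s]) ∧ v = u ++ [s]))

/-!
A walk through G from the root reads its labels block by block: each return to the root
completes a terminal node of T, and the current vertex is the unfinished block, a
non-terminal node of T. Hence every prefix of the label sequence is a concatenation of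
terminal nodes followed by a node of T, i.e. lies in T^*. Conversely, terminal nodes are
pairwise prefix-incomparable, so a word of T^* splits uniquely into terminal blocks; this
forces each label of an element of F_T to extend the current block inside T, which is
exactly the condition for the (deterministic) next edge of G to exist.
-/

def Parses {m : ℕ} (T : Finset (List (Fin m))) (σ u : List (Fin m)) : Prop :=
  ∃ l : List (List (Fin m)), (∀ κ ∈ l, IsTerminal T κ) ∧ σ = l.flatten ++ u

/-- The vertices of G are the non-terminal nodes of `T`. -/
def IsVertex {m : ℕ} (T : Finset (List (Fin m))) (u : List (Fin m)) : Prop :=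
  u ∈ T ∧ ¬ IsTerminal T u

open Classical in
noncomputable def succVertex {m : ℕ} (T : Finset (List (Fin m))) (u : List (Fin m))
    (s : Fin m) : List (Fin m) :=
  if IsTerminal T (u ++ [s]) then [] else u ++ [s]

/-- The walk through G from the root that reads `x`, as long as `x` stays inside `T^*`. -/
noncomputable def walk {m : ℕ} (T : Finset (List (Fin m))) (x : ℕ → Fin m) : ℕ → List (Fin m)
  | 0 => []
  | t + 1 => succVertex T (walk T x t) (x t)

section

variable {m : ℕ} {T : Finset (List (Fin m))}

lemma seg_zero_succ (x : ℕ → Fin m) (N : ℕ) : seg x 0 (N + 1) = seg x 0 N ++ [x N] := by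
  simp only [seg, Nat.sub_zero, Nat.zero_add]
  rw [List.ofFn_succ_last]
  rfl

lemma inTstar_iff {σ : List (Fin m)} : InTstar T σ ↔ ∃ ρ ∈ T, Parses T σ ρ := by
  simp only [InTstar, Parses]
  aesop

lemma step_iff {u v : List (Fin m)} {s : Fin m} :
    Step T u s v ↔ u ++ [s] ∈ T ∧ v = succVertex T u s := by
  unfold Step succVertex
  by_cases h : IsTerminal T (u ++ [s]) <;> simp [h]

lemma Step.isVertex (hroot : [] ∈ T) (hnt : ¬ IsTerminal T []) {u v : List (Fin m)}
    {s : Fin m} (h : Step T u s v) : IsVertex T v := by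
  rcases h with ⟨hs, ⟨-, rfl⟩ | ⟨hs', rfl⟩⟩
  exacts [⟨hroot, hnt⟩, ⟨hs, hs'⟩]

lemma Parses.nil : Parses T [] [] := ⟨[], by simp, rfl⟩

lemma Parses.append_step {σ u v : List (Fin m)} {s : Fin m} (h : Parses T σ u)
    (hs : Step T u s v) : Parses T (σ ++ [s]) v := by
  obtain ⟨l, hl, rfl⟩ := h
  rcases hs with ⟨-, ⟨hterm, rfl⟩ | ⟨-, rfl⟩⟩
  · refine ⟨l ++ [u ++ [s]], ?_, by simp⟩
    simpa [or_imp, forall_and] using ⟨hl, hterm⟩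
  · exact ⟨l, hl, by simp⟩

lemma parses_of_walk (hroot : [] ∈ T) (hnt : ¬ IsTerminal T [])
    {w : ℕ → List (Fin m)} {a : ℕ → Fin m} (hw0 : w 0 = []) :
    ∀ t, (∀ i < t, Step T (w i) (a i) (w (i + 1))) →
      Parses T (seg a 0 t) (w t) ∧ IsVertex T (w t)
  | 0, _ => by simpa [hw0, seg] using ⟨Parses.nil, hroot, hnt⟩
  | t + 1, hw => by
    have hstep := hw t t.lt_succ_self
    obtain ⟨hparse, -⟩ :=
      parses_of_walk hroot hnt hw0 t fun i hi => hw i (hi.trans t.lt_succ_self)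
    rw [seg_zero_succ]
    exact ⟨hparse.append_step hstep, hstep.isVertex hroot hnt⟩

lemma IsTerminal.eq_of_append_eq {κ κ' r r' : List (Fin m)} (hκ : IsTerminal T κ)
    (hκ' : IsTerminal T κ') (h : κ ++ r = κ' ++ r') : κ = κ' := by
  rcases List.prefix_or_prefix_of_prefix ⟨r, h⟩ (List.prefix_append κ' r') with h' | h'
  exacts [(hκ.2 κ' hκ'.1 h').symm, hκ'.2 κ hκ.1 h']

lemma IsVertex.append_mem_of_parses {u ρ : List (Fin m)} {s : Fin m} (hu : IsVertex T u)
    (h : Parses T (u ++ [s]) ρ) (hρ : ρ ∈ T) : u ++ [s] ∈ T := by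
  obtain ⟨l, hl, heq⟩ := h
  cases l with
  | nil => simpa [heq] using hρ
  | cons κ rest =>
    have hκ := hl κ List.mem_cons_self
    have hpre : κ <+: u ++ [s] := ⟨rest.flatten ++ ρ, by simp [heq]⟩
    rcases List.prefix_concat_iff.1 hpre with rfl | hκu
    · exact hκ.1
    · exact absurd (hκ.2 u hu.1 hκu ▸ hκ) hu.2

lemma Parses.append_mem {σ u ρ : List (Fin m)} {s : Fin m} (hu : IsVertex T u)
    (h : Parses T σ u) (h' : Parses T (σ ++ [s]) ρ) (hρ : ρ ∈ T) : u ++ [s] ∈ T := by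
  obtain ⟨l, hl, rfl⟩ := h
  obtain ⟨l', hl', heq⟩ := h'
  induction l generalizing l' with
  | nil => exact hu.append_mem_of_parses ⟨l', hl', by simpa using heq⟩ hρ
  | cons κ rest ih =>
    have hκ := hl κ List.mem_cons_self
    cases l' with
    | nil =>
      have hρκ : ρ = κ := hκ.2 ρ hρ ⟨rest.flatten ++ u ++ [s], by simpa using heq⟩
      simp [hρκ] at heq
    | cons κ' rest' =>
      simp only [List.flatten_cons, List.append_assoc] at heq
      obtain rfl := hκ.eq_of_append_eq (hl' κ' List.mem_cons_self) heq
      exact ih (fun κ h => hl κ (List.mem_cons_of_mem _ h)) rest'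
        (fun κ h => hl' κ (List.mem_cons_of_mem _ h)) (by simpa using heq)

lemma step_walk (hroot : [] ∈ T) (hnt : ¬ IsTerminal T []) {x : ℕ → Fin m}
    (hx : ∀ N, InTstar T (seg x 0 N)) (t : ℕ) :
    Step T (walk T x t) (x t) (walk T x (t + 1)) := by
  induction t using Nat.strong_induction_on with
  | _ t ih =>
    obtain ⟨hparse, hvert⟩ := parses_of_walk hroot hnt rfl t ih
    obtain ⟨ρ, hρ, hparse'⟩ := inTstar_iff.1 (hx (t + 1))
    rw [seg_zero_succ] at hparse'
    exact step_iff.2 ⟨hparse.append_mem hvert hparse' hρ, rfl⟩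

lemma eq_walk {w : ℕ → List (Fin m)} {x : ℕ → Fin m} (hw0 : w 0 = [])
    (hw : ∀ t, Step T (w t) (x t) (w (t + 1))) : w = walk T x := by
  funext t
  induction t with
  | zero => exact hw0
  | succ t ih => rw [(step_iff.1 (hw t)).2, ih, walk]

end

theorem walks_eq_fractal_paths_general {m : ℕ}
    (T : Finset (List (Fin m)))
    (hroot : ([] : List (Fin m)) ∈ T) (hnt : ¬ IsTerminal T ([] : List (Fin m))) :
    (∀ (w : ℕ → List (Fin m)) (a : ℕ → Fin m), w 0 = [] →
        (∀ t, Step T (w t) (a t) (w (t + 1))) →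
        ∀ N : ℕ, InTstar T (seg a 0 N)) ∧
    (∀ x : ℕ → Fin m, (∀ N : ℕ, InTstar T (seg x 0 N)) →
        ∃! w : ℕ → List (Fin m),
          w 0 = [] ∧ ∀ t, Step T (w t) (x t) (w (t + 1))) := by
  refine ⟨fun w a hw0 hw N => ?_, fun x hx => ?_⟩
  · obtain ⟨hparse, hvert⟩ := parses_of_walk hroot hnt hw0 N fun i _ => hw i
    exact inTstar_iff.2 ⟨w N, hvert.1, hparse⟩
  · exact ⟨walk T x, ⟨rfl, step_walk hroot hnt hx⟩, fun w ⟨hw0, hw⟩ => eq_walk hw0 hw⟩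

/-- Let G be the pointed directed graph associated to a finite tree T,
with distinguished vertex v_1 = [].  The label sequence of every infinite walk through
G starting at v_1 lies in F_T = [T^*]; conversely, every element of F_T is the label
sequence of a unique infinite walk in G starting at v_1. -/
theorem walks_eq_fractal_paths {m : ℕ} (hm : 1 ≤ m)
    (T : Finset (List (Fin m))) (hdc : DownClosed T)
    (hroot : ([] : List (Fin m)) ∈ T) (hnt : ¬ IsTerminal T ([] : List (Fin m))) :
    (∀ (w : ℕ → List (Fin m)) (a : ℕ → Fin m), w 0 = [] →
        (∀ t, Step T (w t) (a t) (w (t + 1))) →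
        ∀ N : ℕ, InTstar T (seg a 0 N)) ∧
    (∀ x : ℕ → Fin m, (∀ N : ℕ, InTstar T (seg x 0 N)) →
        ∃! w : ℕ → List (Fin m),
          w 0 = [] ∧ ∀ t, Step T (w t) (x t) (w (t + 1))) :=
  walks_eq_fractal_paths_general T hroot hnt
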